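/- arXiv:1704.03802 — 3 statements merged into one kernel-verified Lean document; each statement's English description precedes it below -/
import Mathlib

section
/- Let Γ ⊂ ℝⁿ be an open convex symmetric cone containing the vector e = (1,…,1), and let f : Γ → ℝ be differentiable, concave, symmetric (invariant under permutations of coordinates) and positively one-homogeneous. Then for every z ∈ Γ one has f(z) ≤ (f(1,…,1)/n)·(z₁ + … + z_n). -/
/-!
Averaging `z` over its cyclic shifts gives `(∑ zᵢ / n) • e`; by symmetry every shift has the same
value as `z`, so Jensen's inequality gives `f z ≤ f ((∑ zᵢ / n) • e)`. It remains to see that a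
concave one-homogeneous function satisfies `f (c • e) ≤ c * f e` for every real `c`, which for
`c ≤ 0` follows by writing `0` as a convex combination of `c • e` and `e`.
-/

open Finset

theorem ConcaveOn.map_smul_le_of_homogeneous {E : Type*} [AddCommGroup E] [Module ℝ E]
    {s : Set E} {f : E → ℝ} (hf : ConcaveOn ℝ s f)
    (hhom : ∀ z ∈ s, ∀ l : ℝ, 0 < l → f (l • z) = l * f z)
    {x : E} (hx : x ∈ s) {c : ℝ} (hcx : c • x ∈ s) : f (c • x) ≤ c * f x := by
  rcases lt_or_ge 0 c with hc | hc
  · exact (hhom x hx c hc).le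
  have h1c : 0 < 1 - c := by linarith
  have ha : 0 ≤ (1 - c)⁻¹ := by positivity
  have hb : 0 ≤ -c / (1 - c) := div_nonneg (by linarith) h1c.le
  have hab : (1 - c)⁻¹ + -c / (1 - c) = 1 := by field_simp; ring
  have hzero : (1 - c)⁻¹ • c • x + (-c / (1 - c)) • x = 0 := by
    rw [smul_smul, ← add_smul]
    convert zero_smul ℝ x using 2
    field_simp
    ring
  have h0 : (0 : E) ∈ s := hzero ▸ hf.1 hcx hx ha hb hab
  have hf0 : f 0 = 0 := by
    have h2 := hhom 0 h0 2 two_pos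
    rw [smul_zero] at h2
    linarith
  have hconc := hf.2 hcx hx ha hb hab
  rw [hzero, hf0, smul_eq_mul, smul_eq_mul] at hconc
  have key : f (c • x) + -c * f x ≤ 0 := by
    have := mul_le_mul_of_nonneg_left hconc h1c.le
    field_simp at this
    linarith
  linarith

section Average

variable {ι E : Type*} [Fintype ι] [Nonempty ι] [AddCommGroup E] [Module ℝ E]
  {s : Set E} {p : ι → E}

theorem Convex.inv_card_smul_sum_mem (hs : Convex ℝ s) (hp : ∀ i, p i ∈ s) :
    (Fintype.card ι : ℝ)⁻¹ • ∑ i, p i ∈ s := by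
  rw [smul_sum]
  exact hs.sum_mem (fun _ _ => by positivity) (by simp) (fun i _ => hp i)

theorem ConcaveOn.le_map_inv_card_smul_sum {f : E → ℝ} (hf : ConcaveOn ℝ s f)
    (hp : ∀ i, p i ∈ s) {y : ℝ} (hfp : ∀ i, f (p i) = y) :
    y ≤ f ((Fintype.card ι : ℝ)⁻¹ • ∑ i, p i) := by
  have h := hf.le_map_sum (t := univ) (w := fun _ => (Fintype.card ι : ℝ)⁻¹) (fun _ _ => by positivity) (by simp) (fun i _ => hp i)
  simpa [hfp, ← smul_sum] using h

end Average

theorem EuclideanSpace.sum_shift_eq_sum_smul {ι : Type*} [Fintype ι] [AddGroup ι]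
    (z e : EuclideanSpace ℝ ι) (he : ∀ i, e i = 1) :
    ∑ k, WithLp.toLp 2 (fun i => z (i + k)) = (∑ j, z j) • e := by
  ext i
  rw [WithLp.ofLp_sum, Finset.sum_apply, PiLp.smul_apply, he i, smul_eq_mul, mul_one]
  exact Fintype.sum_equiv (Equiv.addLeft i) _ _ (fun _ => rfl)

theorem concave_symmetric_homogeneous_le_trace_general
    (n : ℕ) (hn : 0 < n) (Γ : Set (EuclideanSpace ℝ (Fin n)))
    (hconv : Convex ℝ Γ)
    (hΓsym : ∀ z ∈ Γ, ∀ σ : Equiv.Perm (Fin n), (WithLp.toLp 2 (fun i => z (σ i))) ∈ Γ)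
    (e : EuclideanSpace ℝ (Fin n)) (he : ∀ i, e i = 1) (heΓ : e ∈ Γ)
    (f : EuclideanSpace ℝ (Fin n) → ℝ)
    (hconc : ConcaveOn ℝ Γ f)
    (hfsym : ∀ z ∈ Γ, ∀ σ : Equiv.Perm (Fin n), f (WithLp.toLp 2 (fun i => z (σ i))) = f z)
    (hhom : ∀ z ∈ Γ, ∀ l : ℝ, 0 < l → f (l • z) = l * f z) :
    ∀ z ∈ Γ, f z ≤ (f e / n) * ∑ i, z i := by
  have : NeZero n := ⟨hn.ne'⟩
  intro z hz
  let shift (k : Fin n) : EuclideanSpace ℝ (Fin n) := WithLp.toLp 2 (fun i => z (i + k))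
  have hshiftΓ (k : Fin n) : shift k ∈ Γ := hΓsym z hz (Equiv.addRight k)
  have hshiftf (k : Fin n) : f (shift k) = f z := hfsym z hz (Equiv.addRight k)
  have hmean : (Fintype.card (Fin n) : ℝ)⁻¹ • ∑ k, shift k = ((∑ i, z i) / n) • e := by
    rw [EuclideanSpace.sum_shift_eq_sum_smul z e he, smul_smul, Fintype.card_fin, inv_mul_eq_div]
  have hmeanΓ := hconv.inv_card_smul_sum_mem hshiftΓ
  rw [hmean] at hmeanΓ
  calc f z ≤ f (((∑ i, z i) / n) • e) := hmean ▸ hconc.le_map_inv_card_smul_sum hshiftΓ hshiftf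
    _ ≤ ((∑ i, z i) / n) * f e := hconc.map_smul_le_of_homogeneous hhom heΓ hmeanΓ
    _ = (f e / n) * ∑ i, z i := by ring

/-- A concave, symmetric, positively one-homogeneous, differentiable
function on an open convex symmetric cone containing `e = (1,…,1)` satisfies
`f z ≤ (f e / n) * (z₁ + … + z_n)`. -/
theorem concave_symmetric_homogeneous_le_trace
    (n : ℕ) (hn : 0 < n) (Γ : Set (EuclideanSpace ℝ (Fin n)))
    (hopen : IsOpen Γ) (hconv : Convex ℝ Γ)
    (hcone : ∀ z ∈ Γ, ∀ l : ℝ, 0 < l → l • z ∈ Γ)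
    (hΓsym : ∀ z ∈ Γ, ∀ σ : Equiv.Perm (Fin n), (WithLp.toLp 2 (fun i => z (σ i))) ∈ Γ)
    (e : EuclideanSpace ℝ (Fin n)) (he : ∀ i, e i = 1) (heΓ : e ∈ Γ)
    (f : EuclideanSpace ℝ (Fin n) → ℝ)
    (hdiff : ∀ z ∈ Γ, DifferentiableAt ℝ f z)
    (hconc : ConcaveOn ℝ Γ f)
    (hfsym : ∀ z ∈ Γ, ∀ σ : Equiv.Perm (Fin n), f (WithLp.toLp 2 (fun i => z (σ i))) = f z)
    (hhom : ∀ z ∈ Γ, ∀ l : ℝ, 0 < l → f (l • z) = l * f z) :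
    ∀ z ∈ Γ, f z ≤ (f e / n) * ∑ i, z i :=
  concave_symmetric_homogeneous_le_trace_general n hn Γ hconv hΓsym e he heΓ f hconc hfsym hhom
end

section
/- Let Γ ⊂ ℝⁿ be an open convex symmetric cone containing (1,…,1), and let f : Γ → ℝ be differentiable, concave, symmetric, positively one-homogeneous and strictly positive on Γ. Then z₁ + … + z_n > 0 for every z ∈ Γ. -/
/-!
Positivity and one-homogeneity of `f` keep `0` out of `Γ`, since `f 0 = f (2 • 0) = 2 * f 0`.
Averaging `z ∈ Γ` over its cyclic shifts stays in the convex, permutation-invariant `Γ` and gives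
`t • e` with `t = (z₁ + … + z_n) / n`. If `t ≤ 0`, then `0` lies on the segment from `t • e` to
`e`, hence in `Γ`.
-/

theorem zero_notMem_of_homogeneous_of_pos {E : Type*} [AddCommGroup E] [Module ℝ E]
    {Γ : Set E} {f : E → ℝ} (hhom : ∀ z ∈ Γ, ∀ l : ℝ, 0 < l → f (l • z) = l * f z)
    (hpos : ∀ z ∈ Γ, 0 < f z) : (0 : E) ∉ Γ := by
  intro h0
  have h2 : f 0 = 2 * f 0 := by simpa using hhom 0 h0 2 two_pos
  linarith [hpos 0 h0]

theorem Convex.zero_mem_of_smul_mem_of_nonpos {E : Type*} [AddCommGroup E] [Module ℝ E]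
    {s : Set E} (hs : Convex ℝ s) {x : E} {t : ℝ} (hx : x ∈ s) (htx : t • x ∈ s)
    (ht : t ≤ 0) : (0 : E) ∈ s := by
  have h1t : 0 < 1 - t := by linarith
  convert hs htx hx (inv_pos.2 h1t).le (div_nonneg (neg_nonneg.2 ht) h1t.le)
    (by field_simp; ring) using 1
  rw [smul_smul, ← add_smul]
  field_simp
  simp

theorem Convex.mean_smul_mem_of_forall_shift_mem {ι : Type*} [Fintype ι] [AddGroup ι]
    {Γ : Set (EuclideanSpace ℝ ι)} (hconv : Convex ℝ Γ)
    (hshift : ∀ z ∈ Γ, ∀ k : ι, (WithLp.toLp 2 (fun i => z (i + k)) : EuclideanSpace ℝ ι) ∈ Γ)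
    {e : EuclideanSpace ℝ ι} (he : ∀ i, e i = 1) {z : EuclideanSpace ℝ ι} (hz : z ∈ Γ) :
    ((∑ i, z i) / Fintype.card ι) • e ∈ Γ := by
  have hcard : (Fintype.card ι : ℝ) ≠ 0 := Nat.cast_ne_zero.2 Fintype.card_ne_zero
  have hmean : ∑ k, (Fintype.card ι : ℝ)⁻¹ •
      (WithLp.toLp 2 (fun i => z (i + k)) : EuclideanSpace ℝ ι) =
        ((∑ i, z i) / Fintype.card ι) • e := by
    ext i
    have hshift_sum : ∑ k, z (i + k) = ∑ j, z j :=
      Fintype.sum_equiv (Equiv.addLeft i) _ _ fun _ => rfl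
    simp only [WithLp.ofLp_sum, WithLp.ofLp_smul, Finset.sum_apply, Pi.smul_apply,
      PiLp.smul_apply, smul_eq_mul, he i, mul_one]
    rw [← Finset.mul_sum, hshift_sum, div_eq_inv_mul]
  rw [← hmean]
  refine hconv.sum_mem (fun _ _ => by positivity) ?_ fun k _ => hshift z hz k
  simp [hcard]

theorem trace_pos_of_concave_symmetric_homogeneous_pos_general
    (n : ℕ) (hn : 0 < n) (Γ : Set (EuclideanSpace ℝ (Fin n)))
    (hconv : Convex ℝ Γ)
    (hΓsym : ∀ z ∈ Γ, ∀ σ : Equiv.Perm (Fin n), (WithLp.toLp 2 (fun i => z (σ i)) : EuclideanSpace ℝ (Fin n)) ∈ Γ)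
    (e : EuclideanSpace ℝ (Fin n)) (he : ∀ i, e i = 1) (heΓ : e ∈ Γ)
    (f : EuclideanSpace ℝ (Fin n) → ℝ)
    (hhom : ∀ z ∈ Γ, ∀ l : ℝ, 0 < l → f (l • z) = l * f z)
    (hpos : ∀ z ∈ Γ, 0 < f z) :
    ∀ z ∈ Γ, 0 < ∑ i, z i := by
  have : NeZero n := ⟨hn.ne'⟩
  intro z hz
  by_contra! htrace
  have hmean : ((∑ i, z i) / Fintype.card (Fin n)) • e ∈ Γ :=
    hconv.mean_smul_mem_of_forall_shift_mem (fun z hz k => hΓsym z hz (Equiv.addRight k)) he hz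
  exact zero_notMem_of_homogeneous_of_pos hhom hpos <|
    hconv.zero_mem_of_smul_mem_of_nonpos heΓ hmean
      (div_nonpos_of_nonpos_of_nonneg htrace (by positivity))

/-- A positive, concave, symmetric, positively one-homogeneous,
differentiable function on an open convex symmetric cone containing `(1,…,1)`
forces the trace `z₁ + … + z_n` to be positive on the cone. -/
theorem trace_pos_of_concave_symmetric_homogeneous_pos
    (n : ℕ) (hn : 0 < n) (Γ : Set (EuclideanSpace ℝ (Fin n)))
    (hopen : IsOpen Γ) (hconv : Convex ℝ Γ)
    (hcone : ∀ z ∈ Γ, ∀ l : ℝ, 0 < l → l • z ∈ Γ)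
    (hΓsym : ∀ z ∈ Γ, ∀ σ : Equiv.Perm (Fin n), (WithLp.toLp 2 (fun i => z (σ i)) : EuclideanSpace ℝ (Fin n)) ∈ Γ)
    (e : EuclideanSpace ℝ (Fin n)) (he : ∀ i, e i = 1) (heΓ : e ∈ Γ)
    (f : EuclideanSpace ℝ (Fin n) → ℝ)
    (hdiff : ∀ z ∈ Γ, DifferentiableAt ℝ f z)
    (hconc : ConcaveOn ℝ Γ f)
    (hfsym : ∀ z ∈ Γ, ∀ σ : Equiv.Perm (Fin n), f (WithLp.toLp 2 (fun i => z (σ i))) = f z)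
    (hhom : ∀ z ∈ Γ, ∀ l : ℝ, 0 < l → f (l • z) = l * f z)
    (hpos : ∀ z ∈ Γ, 0 < f z) :
    ∀ z ∈ Γ, 0 < ∑ i, z i :=
  trace_pos_of_concave_symmetric_homogeneous_pos_general n hn Γ hconv hΓsym e he heΓ f hhom hpos
end

section
/- Let C > 0, β > 0 and q < 1. There is no differentiable function φ : (−∞, 0] → (0, ∞) satisfying φ'(t) ≤ −C·(1−t)^{−q}·φ(t)^{1+β} for all t ≤ 0. -/
/-!
Substituting `ψ = φ ^ (-β)` turns the inequality into `ψ' ≥ β C (1 - t) ^ (-q)`, so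
`φ ^ (-β) + β C (1 - t) ^ (1 - q) / (1 - q)` is nondecreasing on `(-∞, 0]` and hence bounded by
its value at `0`. Since `q < 1`, its second term tends to `+∞` as `t → -∞`, while the first stays
positive.
-/

open Real Set Filter

theorem monotoneOn_Iic_of_hasDerivAt_nonneg {f f' : ℝ → ℝ} {a : ℝ}
    (hf : ∀ t ≤ a, HasDerivAt f (f' t) t) (hf' : ∀ t < a, 0 ≤ f' t) :
    MonotoneOn f (Iic a) := by
  refine monotoneOn_of_hasDerivWithinAt_nonneg (f' := f') (convex_Iic a)
    (fun t ht => (hf t ht).continuousAt.continuousWithinAt) (fun t ht => ?_) (fun t ht => ?_) <;>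
  rw [interior_Iic] at ht
  · exact (hf t ht.le).hasDerivWithinAt
  · exact hf' t ht

theorem hasDerivAt_one_sub_rpow_div {q t : ℝ} (hq : q ≠ 1) (ht : t < 1) :
    HasDerivAt (fun s => (1 - s) ^ (1 - q) / (1 - q)) (-(1 - t) ^ (-q)) t := by
  have h := (((hasDerivAt_id t).const_sub 1).rpow_const (p := 1 - q)
    (Or.inl (sub_ne_zero.2 ht.ne'))).div_const (1 - q)
  rw [show 1 - q - 1 = -q by ring] at h
  refine h.congr_deriv ?_
  field_simp [sub_ne_zero.2 hq.symm]
  simp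

theorem tendsto_one_sub_rpow_div_atBot {q : ℝ} (hq : q < 1) :
    Tendsto (fun s => (1 - s) ^ (1 - q) / (1 - q)) atBot atTop :=
  ((tendsto_rpow_atTop (sub_pos.2 hq)).comp
    ((tendsto_atTop_add_const_left _ 1 tendsto_neg_atBot_atTop).congr
      fun s => (sub_eq_add_neg 1 s).symm)).atTop_div_const (sub_pos.2 hq)

theorem mul_le_of_le_neg_mul_rpow {x d c β : ℝ} (hx : 0 < x) (hβ : 0 ≤ β)
    (hd : d ≤ -c * x ^ (1 + β)) : β * c ≤ d * -β * x ^ (-β - 1) := by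
  have hcancel : x ^ (1 + β) * x ^ (-β - 1) = 1 := by
    rw [← rpow_add hx, show 1 + β + (-β - 1) = 0 by ring, rpow_zero]
  calc β * c = -c * x ^ (1 + β) * -β * x ^ (-β - 1) := by linear_combination β * c * hcancel.symm
    _ ≤ d * -β * x ^ (-β - 1) := by
      gcongr ?_ * _
      exact mul_le_mul_of_nonpos_right hd (neg_nonpos.2 hβ)

/-- There is no positive differentiable function on `(−∞,0]`
satisfying `φ'(t) ≤ −C (1−t)^{−q} φ(t)^{1+β}` when `C > 0`, `β > 0`, `q < 1`. -/
theorem no_ancient_positive_subsolution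
    (C β q : ℝ) (hC : 0 < C) (hβ : 0 < β) (hq : q < 1) :
    ¬ ∃ (φ φ' : ℝ → ℝ),
      (∀ t ≤ (0 : ℝ), 0 < φ t) ∧
      (∀ t ≤ (0 : ℝ), HasDerivAt φ (φ' t) t) ∧
      (∀ t ≤ (0 : ℝ), φ' t ≤ -C * (1 - t) ^ (-q) * φ t ^ (1 + β)) := by
  rintro ⟨φ, φ', hpos, hder, hineq⟩
  set ψ : ℝ → ℝ := fun s => φ s ^ (-β) + β * C * ((1 - s) ^ (1 - q) / (1 - q))
  have hψ_mono : MonotoneOn ψ (Iic 0) := by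
    refine monotoneOn_Iic_of_hasDerivAt_nonneg
      (f' := fun t => φ' t * -β * φ t ^ (-β - 1) + β * C * -(1 - t) ^ (-q))
      (fun t ht => ?_) (fun t ht => ?_)
    · exact ((hder t ht).rpow_const (Or.inl (hpos t ht).ne')).add
        ((hasDerivAt_one_sub_rpow_div hq.ne (by linarith)).const_mul (β * C))
    · have hψ' := mul_le_of_le_neg_mul_rpow (c := C * (1 - t) ^ (-q)) (hpos t ht.le) hβ.le
        (by simpa only [neg_mul, mul_assoc] using hineq t ht.le)
      linarith
  obtain ⟨t, ht, hψt⟩ := ((eventually_le_atBot 0).and <|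
    (tendsto_one_sub_rpow_div_atBot hq).const_mul_atTop (by positivity : 0 < β * C)
      |>.eventually_gt_atTop (ψ 0)).exists
  have hψ_le := hψ_mono ht self_mem_Iic ht
  have hφ_rpow := rpow_pos_of_pos (hpos t ht) (-β)
  linarith
end
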